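/- arXiv:1912.02563 — 3 statements merged into one kernel-verified Lean document; each statement's English description precedes it below -/
import Mathlib

section
/- Let (X, d, x₀) be a pointed extended pseudometric space and p ∈ [1, ∞]. Then W_p[d, x₀] on D(X, x₀) satisfies the separation axiom (W_p(α, β) = 0 implies α = β) if and only if d satisfies the separation axiom, and W_p is finite-valued if and only if d is finite-valued. -/
open scoped ENNReal BigOperators
noncomputable section

/-- An extended pseudometric. -/
structure IsEPMetric {X : Type*} (d : X → X → ℝ≥0∞) : Prop where
  refl : ∀ x, d x x = 0
  symm : ∀ x y, d x y = d y x
  triangle : ∀ x y z, d x z ≤ d x y + d y z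

/-- The ℓ^p norm of a finite tuple of extended nonnegative reals. -/
def lpNorm (p : ℝ≥0∞) {n : ℕ} (v : Fin n → ℝ≥0∞) : ℝ≥0∞ :=
  if p = ∞ then ⨆ i, v i else (∑ i, v i ^ p.toReal) ^ (1 / p.toReal)

variable {X : Type*}

/-- The congruence on the free commutative monoid (multisets) identifying
formal sums that differ by copies of the basepoint. -/
def diagCon (x₀ : X) : AddCon (Multiset X) where
  r s t := ∃ a b : ℕ, s + Multiset.replicate a x₀ = t + Multiset.replicate b x₀
  iseqv := by
    constructor
    · exact fun s => ⟨0, 0, rfl⟩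
    · rintro s t ⟨a, b, h⟩; exact ⟨b, a, h.symm⟩
    · rintro s t u ⟨a, b, h₁⟩ ⟨a', b', h₂⟩
      refine ⟨a + a', b' + b, ?_⟩
      have h3 : s + Multiset.replicate a x₀ + Multiset.replicate a' x₀
          = u + Multiset.replicate b' x₀ + Multiset.replicate b x₀ := by
        rw [h₁, add_right_comm, h₂, add_right_comm]
      simpa [Multiset.replicate_add, add_assoc] using h3
  add' := by
    rintro s t s' t' ⟨a, b, h₁⟩ ⟨a', b', h₂⟩
    refine ⟨a + a', b + b', ?_⟩
    have h3 : (s + Multiset.replicate a x₀) + (s' + Multiset.replicate a' x₀)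
        = (t + Multiset.replicate b x₀) + (t' + Multiset.replicate b' x₀) := by rw [h₁, h₂]
    calc s + s' + Multiset.replicate (a + a') x₀
        = (s + Multiset.replicate a x₀) + (s' + Multiset.replicate a' x₀) := by
          rw [Multiset.replicate_add]; exact add_add_add_comm s s' _ _
      _ = (t + Multiset.replicate b x₀) + (t' + Multiset.replicate b' x₀) := h3
      _ = t + t' + Multiset.replicate (b + b') x₀ := by
          rw [Multiset.replicate_add]; exact (add_add_add_comm t t' _ _).symm

/-- The monoid of persistence diagrams on a pointed set. -/
abbrev Diagram (X : Type*) (x₀ : X) := (diagCon x₀).Quotient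

/-- The canonical map `X → D(X,x₀)`. -/
def diagι (x₀ : X) (x : X) : Diagram X x₀ := (diagCon x₀).mk' {x}

/-- Pad a tuple to length `r` with copies of the basepoint. -/
def padTo (x₀ : X) {n : ℕ} (x : Fin n → X) (r : ℕ) : Fin r → X :=
  fun k => if h : (k : ℕ) < n then x ⟨k, h⟩ else x₀

/-- The minimal ℓ^p matching cost between two tuples of equal length. -/
def matchCost (d : X → X → ℝ≥0∞) (p : ℝ≥0∞) {r : ℕ} (x y : Fin r → X) : ℝ≥0∞ :=
  ⨅ σ : Equiv.Perm (Fin r), lpNorm p (fun k => d (x k) (y (σ k)))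

/-- A tuple enumerating a multiset. -/
def mFun (s : Multiset X) : Fin s.toList.length → X := fun k => s.toList.get k

/-- The p-Wasserstein cost between two multisets, padding both to the combined length. -/
def WpM (d : X → X → ℝ≥0∞) (x₀ : X) (p : ℝ≥0∞) (s t : Multiset X) : ℝ≥0∞ :=
  matchCost d p (padTo x₀ (mFun s) (Multiset.card s + Multiset.card t))
                (padTo x₀ (mFun t) (Multiset.card s + Multiset.card t))

/-- The p-Wasserstein distance on the monoid of persistence diagrams. -/
def Wp (d : X → X → ℝ≥0∞) (x₀ : X) (p : ℝ≥0∞) (α β : Diagram X x₀) : ℝ≥0∞ :=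
  ⨅ (s : Multiset X) (t : Multiset X) (_ : (diagCon x₀).mk' s = α)
    (_ : (diagCon x₀).mk' t = β), WpM d x₀ p s t

/-- The Lipschitz norm of a map between extended pseudometric spaces. -/
def eLipNorm {Y : Type*} (d : X → X → ℝ≥0∞) (ρ : Y → Y → ℝ≥0∞) (f : X → Y) : ℝ≥0∞ :=
  sInf {C : ℝ≥0∞ | ∀ x y, ρ (f x) (f y) ≤ C * d x y}


/-! Representatives of two diagrams differ only by copies of `x₀`, so all points that can occur
in a matching of `α` with `β` lie in a fixed finite set. If `d` separates points, a matching
cheaper than the least positive distance on that set pairs equal points only, hence `α = β`.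
Conversely `W_p[ι x, ι y] ≤ d x y` and `ι` is injective. Finiteness of `W_p` gives `d x x₀ < ∞`
by matching `ι x` with the empty diagram, and the triangle inequality through `x₀` does the
rest. -/

lemma le_lpNorm {p : ℝ≥0∞} (hp : p ≠ 0) {n : ℕ} (v : Fin n → ℝ≥0∞) (i : Fin n) :
    v i ≤ lpNorm p v := by
  unfold lpNorm
  split_ifs with htop
  · exact le_iSup v i
  · have ht : p.toReal ≠ 0 := (ENNReal.toReal_pos hp htop).ne'
    calc v i = (v i ^ p.toReal) ^ (1 / p.toReal) := by rw [one_div, ENNReal.rpow_rpow_inv ht]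
      _ ≤ (∑ j, v j ^ p.toReal) ^ (1 / p.toReal) := by
        gcongr
        exact Finset.single_le_sum (f := fun j => v j ^ p.toReal) (fun _ _ => zero_le)
          (Finset.mem_univ i)

lemma lpNorm_le_of_eq_zero_of_ne {p : ℝ≥0∞} (hp : p ≠ 0) {n : ℕ} {v : Fin n → ℝ≥0∞}
    {i₀ : Fin n} (h : ∀ i, i ≠ i₀ → v i = 0) : lpNorm p v ≤ v i₀ := by
  unfold lpNorm
  split_ifs with htop
  · refine iSup_le fun i => ?_
    obtain rfl | hi := eq_or_ne i i₀
    exacts [le_rfl, (h i hi).symm ▸ zero_le]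
  · have ht : 0 < p.toReal := ENNReal.toReal_pos hp htop
    rw [Finset.sum_eq_single i₀ (fun j _ hj => by rw [h j hj, ENNReal.zero_rpow_of_pos ht])
      (by simp), one_div, ENNReal.rpow_rpow_inv ht.ne']

lemma lpNorm_ne_top {p : ℝ≥0∞} {n : ℕ} {v : Fin n → ℝ≥0∞} (h : ∀ i, v i ≠ ∞) :
    lpNorm p v ≠ ∞ := by
  unfold lpNorm
  split_ifs
  · exact iSup_ne_top h
  · exact ENNReal.rpow_ne_top_of_nonneg (by positivity) <| ENNReal.sum_ne_top.2 fun i _ =>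
      ENNReal.rpow_ne_top_of_nonneg ENNReal.toReal_nonneg (h i)

lemma exists_pos_forall_eq_of_lt [DecidableEq X] {d : X → X → ℝ≥0∞}
    (hsep : ∀ x y, d x y = 0 → x = y) (S : Finset X) :
    ∃ ε > 0, ∀ u ∈ S, ∀ v ∈ S, d u v < ε → u = v := by
  refine ⟨((S ×ˢ S).filter fun q => q.1 ≠ q.2).inf fun q => d q.1 q.2, ?_, ?_⟩
  · refine (Finset.lt_inf_iff ENNReal.zero_lt_top).2 fun q hq => pos_iff_ne_zero.2 fun h => ?_
    exact (Finset.mem_filter.1 hq).2 (hsep _ _ h)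
  · intro u hu v hv huv
    by_contra hne
    exact (Finset.inf_le (f := fun q : X × X => d q.1 q.2) (b := (u, v))
      (Finset.mem_filter.2 ⟨Finset.mem_product.2 ⟨hu, hv⟩, hne⟩)).not_gt huv

section Diagram

variable {x₀ : X}

lemma diagCon_mk'_eq_iff {s t : Multiset X} :
    (diagCon x₀).mk' s = (diagCon x₀).mk' t ↔
      ∃ a b : ℕ, s + Multiset.replicate a x₀ = t + Multiset.replicate b x₀ :=
  AddCon.eq _

lemma diagι_injective : Function.Injective (diagι x₀) := by
  intro x y h
  obtain ⟨a, b, hab⟩ := diagCon_mk'_eq_iff.1 h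
  obtain rfl : a = b := by simpa using congrArg Multiset.card hab
  exact Multiset.singleton_inj.1 (add_right_cancel hab)

lemma mem_or_eq_of_mk'_eq {s t : Multiset X} (h : (diagCon x₀).mk' s = (diagCon x₀).mk' t)
    {u : X} (hu : u ∈ s) : u ∈ t ∨ u = x₀ := by
  obtain ⟨a, b, hab⟩ := diagCon_mk'_eq_iff.1 h
  have : u ∈ t + Multiset.replicate b x₀ := hab ▸ Multiset.mem_add.2 (Or.inl hu)
  rcases Multiset.mem_add.1 this with ht | hx₀
  exacts [Or.inl ht, Or.inr (Multiset.eq_of_mem_replicate hx₀)]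

lemma mFun_mem (s : Multiset X) (k : Fin s.toList.length) : mFun s k ∈ s :=
  Multiset.mem_toList.1 (List.get_mem _ _)

lemma padTo_mFun_mem_or_eq (s : Multiset X) {r : ℕ} (k : Fin r) :
    padTo x₀ (mFun s) r k ∈ s ∨ padTo x₀ (mFun s) r k = x₀ := by
  unfold padTo
  split_ifs
  exacts [Or.inl (mFun_mem _ _), Or.inr rfl]

lemma padTo_mFun_mem_insert_toFinset [DecidableEq X] {s s₁ : Multiset X}
    (h : (diagCon x₀).mk' s = (diagCon x₀).mk' s₁) {r : ℕ} (k : Fin r) :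
    padTo x₀ (mFun s) r k ∈ insert x₀ s₁.toFinset := by
  rw [Finset.mem_insert, Multiset.mem_toFinset]
  rcases padTo_mFun_mem_or_eq s k with hs | hx₀
  exacts [(mem_or_eq_of_mk'_eq h hs).symm, Or.inl hx₀]

lemma exists_padTo_mFun_eq {s : Multiset X} {r : ℕ} (hr : Multiset.card s ≤ r) {u : X}
    (hu : u ∈ s) : ∃ k : Fin r, padTo x₀ (mFun s) r k = u := by
  obtain ⟨i, rfl⟩ := List.get_of_mem (Multiset.mem_toList.2 hu)
  have hi : (i : ℕ) < Multiset.card s := by simpa using i.isLt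
  exact ⟨⟨i, hi.trans_le hr⟩, by simp [padTo, hi, mFun]⟩

lemma map_univ_padTo_mFun {s : Multiset X} {r : ℕ} (hr : Multiset.card s ≤ r) :
    Finset.univ.val.map (padTo x₀ (mFun s) r)
      = s + Multiset.replicate (r - Multiset.card s) x₀ := by
  rw [Fin.univ_val_map, ← Multiset.coe_toList s, ← Multiset.coe_replicate, Multiset.coe_add,
    Multiset.coe_eq_coe]
  refine List.Perm.of_eq (List.ext_getElem (by simp [hr]) fun i h₁ h₂ => ?_)
  simp [padTo, mFun, List.getElem_append, List.getElem_replicate]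

lemma mk'_eq_of_padTo_mFun_eq_comp {s t : Multiset X} {r : ℕ} (hs : Multiset.card s ≤ r)
    (ht : Multiset.card t ≤ r) (σ : Equiv.Perm (Fin r))
    (h : ∀ k, padTo x₀ (mFun s) r k = padTo x₀ (mFun t) r (σ k)) :
    (diagCon x₀).mk' s = (diagCon x₀).mk' t := by
  refine diagCon_mk'_eq_iff.2 ⟨r - Multiset.card s, r - Multiset.card t, ?_⟩
  rw [← map_univ_padTo_mFun hs, ← map_univ_padTo_mFun ht]
  conv_rhs => rw [← Multiset.map_univ_val_equiv σ, Multiset.map_map]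
  exact Multiset.map_congr rfl fun k _ => h k

lemma padTo_mFun_singleton (x : X) {r : ℕ} (k : Fin r) :
    padTo x₀ (mFun {x}) r k = if (k : ℕ) = 0 then x else x₀ := by
  have hx : ∀ i, mFun {x} i = x := fun i => Multiset.mem_singleton.1 (mFun_mem _ i)
  simp [padTo, hx]

end Diagram

section Wasserstein

variable {d : X → X → ℝ≥0∞} {x₀ : X} {p : ℝ≥0∞}

lemma Wp_le_lpNorm {s t : Multiset X}
    (σ : Equiv.Perm (Fin (Multiset.card s + Multiset.card t))) :
    Wp d x₀ p ((diagCon x₀).mk' s) ((diagCon x₀).mk' t) ≤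
      lpNorm p fun k => d (padTo x₀ (mFun s) _ k) (padTo x₀ (mFun t) _ (σ k)) :=
  iInf₂_le_of_le s t <| iInf₂_le_of_le rfl rfl <| iInf_le _ σ

lemma exists_perm_lpNorm_lt_of_Wp_lt {α β : Diagram X x₀} {c : ℝ≥0∞}
    (h : Wp d x₀ p α β < c) :
    ∃ (s t : Multiset X) (_ : (diagCon x₀).mk' s = α) (_ : (diagCon x₀).mk' t = β)
      (σ : Equiv.Perm (Fin (Multiset.card s + Multiset.card t))),
      lpNorm p (fun k => d (padTo x₀ (mFun s) _ k) (padTo x₀ (mFun t) _ (σ k))) < c := by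
  simpa only [Wp, WpM, matchCost, iInf_lt_iff] using h

lemma Wp_diagι_le (hp : p ≠ 0) (h₀ : d x₀ x₀ = 0) (x y : X) :
    Wp d x₀ p (diagι x₀ x) (diagι x₀ y) ≤ d x y := by
  refine (Wp_le_lpNorm (Equiv.refl _)).trans <|
    (lpNorm_le_of_eq_zero_of_ne hp (i₀ := ⟨0, by simp⟩) fun i hi => ?_).trans ?_
  · simp [padTo_mFun_singleton, Fin.ext_iff.not.1 hi, h₀]
  · simp [padTo_mFun_singleton]

lemma eq_of_Wp_eq_zero (hp : p ≠ 0) (hsep : ∀ x y, d x y = 0 → x = y) {α β : Diagram X x₀}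
    (h : Wp d x₀ p α β = 0) : α = β := by
  classical
  obtain ⟨s₁, rfl⟩ := AddCon.mk'_surjective α
  obtain ⟨t₁, rfl⟩ := AddCon.mk'_surjective β
  obtain ⟨ε, hε, hsepε⟩ :=
    exists_pos_forall_eq_of_lt hsep (insert x₀ s₁.toFinset ∪ insert x₀ t₁.toFinset)
  obtain ⟨s, t, hs, ht, σ, hσ⟩ := exists_perm_lpNorm_lt_of_Wp_lt (h ▸ hε)
  rw [← hs, ← ht]
  refine mk'_eq_of_padTo_mFun_eq_comp le_self_add le_add_self σ fun k =>
    hsepε _ ?_ _ ?_ ((le_lpNorm hp _ k).trans_lt hσ)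
  · exact Finset.mem_union_left _ (padTo_mFun_mem_insert_toFinset hs k)
  · exact Finset.mem_union_right _ (padTo_mFun_mem_insert_toFinset ht (σ k))

lemma lt_of_Wp_mk'_zero_lt (hp : p ≠ 0) (h₀ : d x₀ x₀ = 0) {s₁ : Multiset X} {c : ℝ≥0∞}
    (h : Wp d x₀ p ((diagCon x₀).mk' s₁) ((diagCon x₀).mk' 0) < c) {u : X} (hu : u ∈ s₁) :
    d u x₀ < c := by
  obtain ⟨s, t, hs, ht, σ, hσ⟩ := exists_perm_lpNorm_lt_of_Wp_lt h
  rcases mem_or_eq_of_mk'_eq hs.symm hu with hu | rfl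
  · obtain ⟨k, rfl⟩ := exists_padTo_mFun_eq (x₀ := x₀) (r := _ + Multiset.card t) le_self_add hu
    have ht₀ : padTo x₀ (mFun t) _ (σ k) = x₀ := by
      classical
      simpa using padTo_mFun_mem_insert_toFinset ht (σ k)
    have hk := (le_lpNorm hp _ k).trans_lt hσ
    rwa [ht₀] at hk
  · exact h₀ ▸ zero_le.trans_lt h

lemma Wp_ne_top (hfin : ∀ x y, d x y ≠ ∞) (α β : Diagram X x₀) : Wp d x₀ p α β ≠ ∞ := by
  obtain ⟨s, rfl⟩ := AddCon.mk'_surjective α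
  obtain ⟨t, rfl⟩ := AddCon.mk'_surjective β
  exact ne_top_of_le_ne_top (lpNorm_ne_top fun _ => hfin _ _)
    (Wp_le_lpNorm (Equiv.refl _))

end Wasserstein

/-- `W_p` satisfies separation iff `d` does, and `W_p` is finite iff `d` is finite. -/
theorem wasserstein_separation_finiteness (d : X → X → ℝ≥0∞) (hd : IsEPMetric d)
    (x₀ : X) (p : ℝ≥0∞) (hp : 1 ≤ p) :
    ((∀ α β : Diagram X x₀, Wp d x₀ p α β = 0 → α = β) ↔ (∀ x y : X, d x y = 0 → x = y)) ∧
    ((∀ α β : Diagram X x₀, Wp d x₀ p α β ≠ ∞) ↔ (∀ x y : X, d x y ≠ ∞)) := by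
  have hp₀ : p ≠ 0 := (zero_lt_one.trans_le hp).ne'
  refine ⟨⟨fun hW x y hxy => diagι_injective (hW _ _ ?_),
    fun hsep _ _ => eq_of_Wp_eq_zero hp₀ hsep⟩, fun hW x y => ?_, fun hfin => Wp_ne_top hfin⟩
  · exact le_antisymm (hxy ▸ Wp_diagι_le hp₀ (hd.refl x₀) x y) zero_le
  · have hfin_to_x₀ (z : X) : d z x₀ < ∞ :=
      lt_of_Wp_mk'_zero_lt hp₀ (hd.refl x₀) (hW (diagι x₀ z) ((diagCon x₀).mk' 0)).lt_top
        (Multiset.mem_singleton_self z)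
    refine ne_of_lt ?_
    calc d x y ≤ d x x₀ + d x₀ y := hd.triangle x x₀ y
      _ = d x x₀ + d y x₀ := by rw [hd.symm x₀ y]
      _ < ∞ := ENNReal.add_lt_top.2 ⟨hfin_to_x₀ x, hfin_to_x₀ y⟩
end
end

section
/- For any pointed extended pseudometric space (X, d, x₀) and p ∈ [1, ∞], the p-Wasserstein distance W_p[d, x₀] is p-subadditive: W_p(α + β, γ + δ) ≤ ‖(W_p(α, γ), W_p(β, δ))‖_p for all persistence diagrams α, β, γ, δ ∈ D(X, x₀). -/
open scoped ENNReal BigOperators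
noncomputable section

variable {X : Type*}

/-!
The padded enumeration of `s + s'` is, up to reordering, the concatenation of the padded
enumerations of `s` and `s'`, and a matching cost only depends on the tuples up to reordering.
Two optimal matchings of the blocks combine into a block-diagonal matching of the concatenations,
whose ℓ^p cost is the ℓ^p norm of the two block costs. Taking infima over representatives of the
diagrams, which commute with the ℓ^p norm of a pair, gives the theorem.
-/

section lpNorm

variable (p : ℝ≥0∞)

theorem lpNorm_pair (a b : ℝ≥0∞) :
    lpNorm p ![a, b] =
      if p = ∞ then a ⊔ b else (a ^ p.toReal + b ^ p.toReal) ^ (1 / p.toReal) := by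
  unfold lpNorm
  split
  · simp [← Finset.sup_univ_eq_iSup, Fin.univ_succ]
  · simp [Fin.sum_univ_two]

theorem lpNorm_comp_perm {n : ℕ} (v : Fin n → ℝ≥0∞) (σ : Equiv.Perm (Fin n)) :
    lpNorm p (v ∘ σ) = lpNorm p v := by
  unfold lpNorm
  split
  · exact σ.iSup_comp (g := v)
  · simp only [Function.comp_apply, Equiv.sum_comp σ (fun i => v i ^ p.toReal)]

theorem lpNorm_append (hp : p ≠ 0) {m n : ℕ} (v : Fin m → ℝ≥0∞) (w : Fin n → ℝ≥0∞) :
    lpNorm p (Fin.append v w) = lpNorm p ![lpNorm p v, lpNorm p w] := by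
  rw [lpNorm_pair]
  unfold lpNorm
  split
  · rw [← finSumFinEquiv.iSup_comp, iSup_sum]
    simp
  · have hp' : p.toReal ≠ 0 := (ENNReal.toReal_pos hp ‹_›).ne'
    simp only [Fin.sum_univ_add, Fin.append_left, Fin.append_right, one_div,
      ENNReal.rpow_inv_rpow hp']

theorem ENNReal.iInf_rpow {ι : Sort*} {c : ℝ} (hc : 0 < c) (f : ι → ℝ≥0∞) :
    (⨅ i, f i) ^ c = ⨅ i, f i ^ c :=
  (ENNReal.orderIsoRpow c hc).map_iInf f

theorem lpNorm_pair_iInf (hp : p ≠ 0) {ι κ : Sort*} (f : ι → ℝ≥0∞) (g : κ → ℝ≥0∞) :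
    lpNorm p ![⨅ i, f i, ⨅ j, g j] = ⨅ (i) (j), lpNorm p ![f i, g j] := by
  simp only [lpNorm_pair]
  split
  · simp only [iInf_sup_eq, sup_iInf_eq]
    exact iInf_comm
  · have hp' : 0 < p.toReal := ENNReal.toReal_pos hp ‹_›
    have hp'' : 0 < 1 / p.toReal := by positivity
    simp only [ENNReal.iInf_rpow hp', ENNReal.iInf_add, ENNReal.add_iInf, ENNReal.iInf_rpow hp'']
    exact iInf_comm

end lpNorm

section matchCost

variable (d : X → X → ℝ≥0∞) (p : ℝ≥0∞)

theorem exists_matchCost_eq {r : ℕ} (x y : Fin r → X) :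
    ∃ σ : Equiv.Perm (Fin r), matchCost d p x y = lpNorm p fun k => d (x k) (y (σ k)) := by
  obtain ⟨σ, hσ⟩ := Finite.exists_min fun σ : Equiv.Perm (Fin r) =>
    lpNorm p fun k => d (x k) (y (σ k))
  exact ⟨σ, le_antisymm (iInf_le _ σ) (le_iInf hσ)⟩

theorem matchCost_comp_perm {r : ℕ} (x y : Fin r → X) (τ₁ τ₂ : Equiv.Perm (Fin r)) :
    matchCost d p (x ∘ τ₁) (y ∘ τ₂) = matchCost d p x y := by
  refine Equiv.iInf_congr ((Equiv.mulRight τ₁⁻¹).trans (Equiv.mulLeft τ₂)) fun σ => ?_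
  rw [← lpNorm_comp_perm p _ τ₁]
  simp [Function.comp_def]

theorem exists_perm_of_coe_ofFn_eq {r : ℕ} {x x' : Fin r → X}
    (h : (List.ofFn x : Multiset X) = List.ofFn x') : ∃ σ : Equiv.Perm (Fin r), x' = x ∘ σ := by
  classical
  let : LinearOrder X := linearOrderOfSTO WellOrderingRel
  have hperm : (List.ofFn (x ∘ Tuple.sort x)).Perm (List.ofFn (x' ∘ Tuple.sort x')) :=
    ((Tuple.sort x).ofFn_comp_perm x).trans <|
      (Multiset.coe_eq_coe.mp h).trans ((Tuple.sort x').ofFn_comp_perm x').symm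
  have hsorted : x ∘ Tuple.sort x = x' ∘ Tuple.sort x' :=
    List.ofFn_injective <| hperm.eq_of_sortedLE
      (List.sortedLE_ofFn_iff.mpr (Tuple.monotone_sort x))
      (List.sortedLE_ofFn_iff.mpr (Tuple.monotone_sort x'))
  refine ⟨(Tuple.sort x').symm.trans (Tuple.sort x), funext fun k => ?_⟩
  simpa using (congrFun hsorted ((Tuple.sort x').symm k)).symm

theorem matchCost_eq_of_coe_ofFn_eq {r : ℕ} {x y x' y' : Fin r → X}
    (hx : (List.ofFn x : Multiset X) = List.ofFn x')
    (hy : (List.ofFn y : Multiset X) = List.ofFn y') :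
    matchCost d p x' y' = matchCost d p x y := by
  obtain ⟨σ₁, rfl⟩ := exists_perm_of_coe_ofFn_eq hx
  obtain ⟨σ₂, rfl⟩ := exists_perm_of_coe_ofFn_eq hy
  exact matchCost_comp_perm d p x y σ₁ σ₂

theorem matchCost_append_le (hp : p ≠ 0) {m n : ℕ} (x y : Fin m → X) (x' y' : Fin n → X) :
    matchCost d p (Fin.append x x') (Fin.append y y') ≤
      lpNorm p ![matchCost d p x y, matchCost d p x' y'] := by
  obtain ⟨σ, hσ⟩ := exists_matchCost_eq d p x y
  obtain ⟨σ', hσ'⟩ := exists_matchCost_eq d p x' y'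
  rw [hσ, hσ', ← lpNorm_append p hp]
  refine iInf_le_of_le (finSumFinEquiv.permCongr (σ.sumCongr σ')) (le_of_eq ?_)
  congr 1
  funext k
  refine Fin.addCases (fun i => ?_) (fun i => ?_) k <;> simp [Equiv.permCongr_apply]

end matchCost

section Wasserstein

variable (d : X → X → ℝ≥0∞) (x₀ : X) (p : ℝ≥0∞)

theorem coe_ofFn_padTo {n : ℕ} (x : Fin n → X) (m : ℕ) :
    (List.ofFn (padTo x₀ x (n + m)) : Multiset X) = List.ofFn x + Multiset.replicate m x₀ := by
  rw [List.ofFn_add, ← Multiset.coe_add, ← Multiset.coe_replicate, ← List.ofFn_const]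
  congr 3 <;> funext i <;> simp [padTo]

theorem coe_ofFn_padTo_mFun (s : Multiset X) {m r : ℕ} (hr : Multiset.card s + m = r) :
    (List.ofFn (padTo x₀ (mFun s) r) : Multiset X) = s + Multiset.replicate m x₀ := by
  rw [← hr, ← Multiset.length_toList, coe_ofFn_padTo,
    show List.ofFn (mFun s) = s.toList from List.ofFn_get _, Multiset.coe_toList]

theorem WpM_eq_matchCost {s t : Multiset X} {r : ℕ} (x y : Fin r → X)
    (hr : Multiset.card s + Multiset.card t = r)
    (hx : (List.ofFn x : Multiset X) = s + Multiset.replicate (Multiset.card t) x₀)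
    (hy : (List.ofFn y : Multiset X) = t + Multiset.replicate (Multiset.card s) x₀) :
    WpM d x₀ p s t = matchCost d p x y := by
  subst hr
  refine matchCost_eq_of_coe_ofFn_eq d p ?_ ?_
  · rw [hx, coe_ofFn_padTo_mFun x₀ s rfl]
  · rw [hy, coe_ofFn_padTo_mFun x₀ t (add_comm _ _)]

theorem WpM_add_le (hp : p ≠ 0) (s s' t t' : Multiset X) :
    WpM d x₀ p (s + s') (t + t') ≤ lpNorm p ![WpM d x₀ p s t, WpM d x₀ p s' t'] := by
  rw [WpM_eq_matchCost d x₀ p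
    (Fin.append (padTo x₀ (mFun s) _) (padTo x₀ (mFun s') _))
    (Fin.append (padTo x₀ (mFun t) _) (padTo x₀ (mFun t') _))]
  · exact matchCost_append_le d p hp _ _ _ _
  · simp only [Multiset.card_add]
    ac_rfl
  · rw [List.ofFn_fin_append, ← Multiset.coe_add, coe_ofFn_padTo_mFun x₀ s rfl,
      coe_ofFn_padTo_mFun x₀ s' rfl, Multiset.card_add, Multiset.replicate_add]
    ac_rfl
  · rw [List.ofFn_fin_append, ← Multiset.coe_add, coe_ofFn_padTo_mFun x₀ t (add_comm _ _),
      coe_ofFn_padTo_mFun x₀ t' (add_comm _ _), Multiset.card_add, Multiset.replicate_add]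
    ac_rfl

theorem Wp_le_WpM {α β : Diagram X x₀} {s t : Multiset X} (hs : (diagCon x₀).mk' s = α)
    (ht : (diagCon x₀).mk' t = β) : Wp d x₀ p α β ≤ WpM d x₀ p s t :=
  iInf₂_le_of_le s t <| iInf₂_le hs ht

theorem Wp_eq_iInf_subtype (α β : Diagram X x₀) :
    Wp d x₀ p α β = ⨅ st : {st : Multiset X × Multiset X //
        (diagCon x₀).mk' st.1 = α ∧ (diagCon x₀).mk' st.2 = β}, WpM d x₀ p st.1.1 st.1.2 := by
  simp only [Wp, iInf_subtype, iInf_and, iInf_prod]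

end Wasserstein

theorem wasserstein_p_subadditive_general (d : X → X → ℝ≥0∞) (x₀ : X)
    (p : ℝ≥0∞) (hp : 1 ≤ p) (α β γ δ : Diagram X x₀) :
    Wp d x₀ p (α + β) (γ + δ) ≤ lpNorm p ![Wp d x₀ p α γ, Wp d x₀ p β δ] := by
  have hp₀ : p ≠ 0 := (zero_lt_one.trans_le hp).ne'
  rw [Wp_eq_iInf_subtype d x₀ p α γ, Wp_eq_iInf_subtype d x₀ p β δ, lpNorm_pair_iInf p hp₀]
  refine le_iInf₂ fun ⟨(s, t), hs, ht⟩ ⟨(s', t'), hs', ht'⟩ => ?_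
  calc Wp d x₀ p (α + β) (γ + δ)
      ≤ WpM d x₀ p (s + s') (t + t') :=
        Wp_le_WpM d x₀ p (by rw [map_add, hs, hs']) (by rw [map_add, ht, ht'])
    _ ≤ _ := WpM_add_le d x₀ p hp₀ s s' t t'

/-- The p-Wasserstein distance is p-subadditive. -/
theorem wasserstein_p_subadditive (d : X → X → ℝ≥0∞) (hd : IsEPMetric d) (x₀ : X)
    (p : ℝ≥0∞) (hp : 1 ≤ p) (α β γ δ : Diagram X x₀) :
    Wp d x₀ p (α + β) (γ + δ) ≤ lpNorm p ![Wp d x₀ p α γ, Wp d x₀ p β δ] :=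
  wasserstein_p_subadditive_general d x₀ p hp α β γ δ

end
end

section
/- Maximality of W_p: let (X, d, x₀) be a pointed extended pseudometric space and ρ a p-subadditive extended pseudometric on D(X, x₀) such that the canonical map i : (X, d) → (D(X, x₀), ρ) is 1-Lipschitz. Then ρ ≤ W_p[d, x₀] pointwise. -/
/-! Both diagrams are sums of images `ι x_k`, `ι y_k` of two tuples padded with the basepoint
to a common length, since `ι x₀ = 0`. Iterating `p`-subadditivity, using that `ℓ^p` norms are
associative, bounds `ρ` of two such sums by the `ℓ^p` norm of the termwise distances
`ρ (ι x_k) (ι y_{σ k})`; the Lipschitz condition bounds these by `d x_k y_{σ k}`, and taking the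
infimum over representatives and matchings gives `W_p`. -/

open scoped ENNReal BigOperators
noncomputable section

variable {X : Type*}

lemma lpNorm_mono {p : ℝ≥0∞} {n : ℕ} {u v : Fin n → ℝ≥0∞} (h : ∀ i, u i ≤ v i) :
    lpNorm p u ≤ lpNorm p v := by
  unfold lpNorm
  split
  · exact iSup_mono h
  · refine ENNReal.rpow_le_rpow ?_ (by positivity)
    exact Finset.sum_le_sum fun i _ => ENNReal.rpow_le_rpow (h i) ENNReal.toReal_nonneg

lemma lpNorm_castSucc (p : ℝ≥0∞) {n : ℕ} (v : Fin (n + 1) → ℝ≥0∞) :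
    lpNorm p v = lpNorm p ![lpNorm p (fun i => v i.castSucc), v (Fin.last n)] := by
  unfold lpNorm
  split_ifs with hp
  · apply le_antisymm
    · refine iSup_le fun i => Fin.lastCases ?_ (fun j => ?_) i
      · exact le_iSup_of_le 1 le_rfl
      · exact le_iSup_of_le 0 (le_iSup_of_le j le_rfl)
    · refine iSup_le fun j => ?_
      fin_cases j
      · exact iSup_le fun i => le_iSup v _
      · exact le_iSup v _
  · by_cases hq : p.toReal = 0
    · simp [hq]
    rw [Fin.sum_univ_two, Fin.sum_univ_castSucc, Matrix.cons_val_zero, Matrix.cons_val_one,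
      Matrix.cons_val_zero, ← ENNReal.rpow_mul, one_div_mul_cancel hq, ENNReal.rpow_one]

lemma apply_sum_le_lpNorm {M : Type*} [AddCommMonoid M] {p : ℝ≥0∞} {ρ : M → M → ℝ≥0∞}
    (h0 : ρ 0 0 = 0) (hsub : ∀ a a' b b', ρ (a + b) (a' + b') ≤ lpNorm p ![ρ a a', ρ b b']) :
    ∀ {n : ℕ} (a b : Fin n → M), ρ (∑ i, a i) (∑ i, b i) ≤ lpNorm p fun i => ρ (a i) (b i)
  | 0, a, b => by simp [h0]
  | n + 1, a, b => by
    rw [Fin.sum_univ_castSucc, Fin.sum_univ_castSucc, lpNorm_castSucc]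
    refine (hsub _ _ _ _).trans (lpNorm_mono fun j => ?_)
    fin_cases j
    · exact apply_sum_le_lpNorm h0 hsub _ _
    · exact le_rfl

lemma sum_padTo {M : Type*} [AddCommMonoid M] (x₀ : X) {f : X → M} (hf : f x₀ = 0) {n r : ℕ}
    (x : Fin n → X) (h : n ≤ r) : ∑ i, f (padTo x₀ x r i) = ∑ i, f (x i) := by
  obtain ⟨m, rfl⟩ := Nat.exists_eq_add_of_le h
  simp [Fin.sum_univ_add, padTo, hf]

lemma diagι_self (x₀ : X) : diagι x₀ x₀ = 0 :=
  (AddCon.eq _).2 ⟨0, 1, by simp⟩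

lemma sum_diagι_mFun (x₀ : X) (s : Multiset X) :
    ∑ i, diagι x₀ (mFun s i) = (diagCon x₀).mk' s := by
  simp only [mFun, List.get_eq_getElem, Fin.sum_univ_fun_getElem]
  rw [← Multiset.sum_coe, ← Multiset.map_coe, Multiset.coe_toList]
  calc (s.map (diagι x₀)).sum = (diagCon x₀).mk' (s.map fun x => {x}).sum := by
        rw [map_multiset_sum, Multiset.map_map]; rfl
    _ = (diagCon x₀).mk' s := by rw [Multiset.sum_map_singleton]

lemma mk'_eq_sum_diagι_padTo (x₀ : X) (s : Multiset X) {r : ℕ} (h : Multiset.card s ≤ r) :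
    (diagCon x₀).mk' s = ∑ i, diagι x₀ (padTo x₀ (mFun s) r i) := by
  rw [sum_padTo x₀ (diagι_self x₀) _ (by simpa using h), sum_diagι_mFun]

theorem wasserstein_maximal_general (d : X → X → ℝ≥0∞) (x₀ : X)
    (p : ℝ≥0∞)
    (ρ : Diagram X x₀ → Diagram X x₀ → ℝ≥0∞) (hρ : IsEPMetric ρ)
    (hsub : ∀ a a' b b' : Diagram X x₀, ρ (a + b) (a' + b') ≤ lpNorm p ![ρ a a', ρ b b'])
    (hlip : ∀ x y : X, ρ (diagι x₀ x) (diagι x₀ y) ≤ d x y) :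
    ∀ α β : Diagram X x₀, ρ α β ≤ Wp d x₀ p α β := by
  intro α β
  refine le_iInf fun s => le_iInf fun t => le_iInf fun hs => le_iInf fun ht => le_iInf fun σ => ?_
  subst hs ht
  have hs := mk'_eq_sum_diagι_padTo x₀ s (Nat.le_add_right _ (Multiset.card t))
  have ht := mk'_eq_sum_diagι_padTo x₀ t (Nat.le_add_left _ (Multiset.card s))
  rw [← Equiv.sum_comp σ] at ht
  rw [hs, ht]
  exact (apply_sum_le_lpNorm (hρ.refl 0) hsub _ _).trans (lpNorm_mono fun i => hlip _ _)

/-- Maximality of `W_p`: any p-subadditive extended pseudometric on `D(X,x₀)` for which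
the canonical map is 1-Lipschitz is bounded above by `W_p`. -/
theorem wasserstein_maximal (d : X → X → ℝ≥0∞) (hd : IsEPMetric d) (x₀ : X)
    (p : ℝ≥0∞) (hp : 1 ≤ p)
    (ρ : Diagram X x₀ → Diagram X x₀ → ℝ≥0∞) (hρ : IsEPMetric ρ)
    (hsub : ∀ a a' b b' : Diagram X x₀, ρ (a + b) (a' + b') ≤ lpNorm p ![ρ a a', ρ b b'])
    (hlip : ∀ x y : X, ρ (diagι x₀ x) (diagι x₀ y) ≤ d x y) :
    ∀ α β : Diagram X x₀, ρ α β ≤ Wp d x₀ p α β :=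
  wasserstein_maximal_general d x₀ p ρ hρ hsub hlip

end
end
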